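/- arXiv:1901.01997 — 3 statements merged into one kernel-verified Lean document; each statement's English description precedes it below -/
import Mathlib

section
/- A tensor Q ∈ ℂ^{n×n×n3} is orthogonal (Q * Q^T = Q^T * Q = I) if and only if every Fourier-domain frontal slice Q̄^{(k)} is a unitary matrix. -/
open Finset Matrix

/-- Block circulant matrix of a tensor given by its frontal slices:
the (p,q) block is the slice with index (p - q) mod n3. -/
noncomputable def bcirc {n1 n2 n3 : ℕ} [NeZero n3]
    (A : Fin n3 → Matrix (Fin n1) (Fin n2) ℂ) :
    Matrix (Fin n3 × Fin n1) (Fin n3 × Fin n2) ℂ :=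
  fun p q => A (p.1 - q.1) p.2 q.2

/-- Unfold operator: stacks the frontal slices of a tensor vertically. -/
def unfold {n2 n3 n4 : ℕ} (B : Fin n3 → Matrix (Fin n2) (Fin n4) ℂ) :
    Matrix (Fin n3 × Fin n2) (Fin n4) ℂ :=
  fun p j => B p.1 p.2 j

/-- t-product A * B = fold(bcirc(A) · unfold(B)), given by its frontal slices. -/
noncomputable def tProd {n1 n2 n3 n4 : ℕ} [NeZero n3]
    (A : Fin n3 → Matrix (Fin n1) (Fin n2) ℂ)
    (B : Fin n3 → Matrix (Fin n2) (Fin n4) ℂ) :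
    Fin n3 → Matrix (Fin n1) (Fin n4) ℂ :=
  fun t => fun i j => (bcirc A * unfold B) (t, i) j

/-- Tensor conjugate transpose: conjugate-transpose each frontal slice and
reverse the order of slices 2,…,n3 (slice k ↦ slice (-k) mod n3). -/
noncomputable def tTrans {n1 n2 n3 : ℕ} [NeZero n3]
    (A : Fin n3 → Matrix (Fin n1) (Fin n2) ℂ) :
    Fin n3 → Matrix (Fin n2) (Fin n1) ℂ :=
  fun k => (A (-k))ᴴ

/-- The identity tensor: first frontal slice is the identity matrix, others zero. -/
noncomputable def idTensor (n n3 : ℕ) [NeZero n3] :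
    Fin n3 → Matrix (Fin n) (Fin n) ℂ :=
  fun k => if k = 0 then 1 else 0

/-- The k-th frontal slice of the DFT of a tensor along the third dimension. -/
noncomputable def dftSlice {n1 n2 n3 : ℕ} (A : Fin n3 → Matrix (Fin n1) (Fin n2) ℂ)
    (k : Fin n3) : Matrix (Fin n1) (Fin n2) ℂ :=
  ∑ t : Fin n3,
    (Complex.exp (-(2 * Real.pi * Complex.I) / n3) ^ ((t : ℕ) * (k : ℕ))) • A t

/-! The DFT along the third mode is Mathlib's `ZMod.dft` transported along `Fin n3 ≃ ZMod n3`,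
hence injective. Its kernel is an additive character, so it turns the t-product (a circular
convolution of slices) into the slicewise matrix product, the tensor conjugate transpose into the
slicewise conjugate transpose, and the identity tensor into identity slices. -/

open ZMod

open Fin.CommRing in
noncomputable def stdAddCharFin (n : ℕ) [NeZero n] : AddChar (Fin n) ℂ :=
  stdAddChar.compAddMonoidHom (finEquiv n).toAddMonoidHom

open Fin.CommRing in
lemma ZMod.finEquiv_apply {n : ℕ} [NeZero n] (t : Fin n) :
    finEquiv n t = ((t : ℕ) : ZMod n) := by
  rw [← map_natCast (finEquiv n), Fin.cast_val_eq_self]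

lemma stdAddCharFin_apply {n : ℕ} [NeZero n] (t : Fin n) :
    stdAddCharFin n t = stdAddChar (finEquiv n t) := rfl

section

variable {n1 n2 n3 n4 : ℕ} [NeZero n3]

lemma dftSlice_eq_sum_stdAddCharFin (A : Fin n3 → Matrix (Fin n1) (Fin n2) ℂ) (k : Fin n3) :
    dftSlice A k = ∑ t, stdAddCharFin n3 (-(t * k)) • A t := by
  refine Finset.sum_congr rfl fun t _ => congrArg (· • A t) ?_
  have h_arg : finEquiv n3 (-(t * k)) = (Int.cast (-((t : ℕ) * (k : ℕ) : ℤ)) : ZMod n3) := by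
    push_cast [map_neg, map_mul, finEquiv_apply]; rfl
  rw [stdAddCharFin_apply, h_arg, stdAddChar_coe, ← Complex.exp_nat_mul]
  congr 1
  push_cast
  ring

lemma dftSlice_eq_dft (A : Fin n3 → Matrix (Fin n1) (Fin n2) ℂ) (k : Fin n3) :
    dftSlice A k = 𝓕 (A ∘ (finEquiv n3).symm) (finEquiv n3 k) := by
  rw [dftSlice_eq_sum_stdAddCharFin, dft_apply]
  refine Fintype.sum_equiv (finEquiv n3).toEquiv _ _ fun t => ?_
  simp [stdAddCharFin_apply]

lemma dftSlice_injective :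
    Function.Injective (dftSlice : (Fin n3 → Matrix (Fin n1) (Fin n2) ℂ) → _) := by
  intro A B h
  have h_dft : 𝓕 (A ∘ (finEquiv n3).symm) = 𝓕 (B ∘ (finEquiv n3).symm) := by
    funext j
    simpa [dftSlice_eq_dft] using congrFun h ((finEquiv n3).symm j)
  simpa [Function.comp_def] using congrArg (· ∘ finEquiv n3) (dft.injective h_dft)

lemma tProd_apply (A : Fin n3 → Matrix (Fin n1) (Fin n2) ℂ)
    (B : Fin n3 → Matrix (Fin n2) (Fin n4) ℂ) (t : Fin n3) :
    tProd A B t = ∑ s, A (t - s) * B s := by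
  ext i j
  simp [tProd, bcirc, unfold, Matrix.mul_apply, Matrix.sum_apply, Fintype.sum_prod_type]

lemma dftSlice_tProd (A : Fin n3 → Matrix (Fin n1) (Fin n2) ℂ)
    (B : Fin n3 → Matrix (Fin n2) (Fin n4) ℂ) (k : Fin n3) :
    dftSlice (tProd A B) k = dftSlice A k * dftSlice B k := by
  simp only [dftSlice_eq_sum_stdAddCharFin, tProd_apply, Finset.smul_sum]
  rw [Finset.sum_comm, Matrix.mul_sum]
  refine Finset.sum_congr rfl fun s _ => ?_
  rw [Matrix.sum_mul]
  refine (Fintype.sum_equiv (Equiv.addRight s) _ _ fun r => ?_).symm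
  have h_char : stdAddCharFin n3 (-((r + s) * k)) =
      stdAddCharFin n3 (-(r * k)) * stdAddCharFin n3 (-(s * k)) := by
    rw [← AddChar.map_add_eq_mul, add_mul, neg_add]
  rw [Equiv.coe_addRight, add_sub_cancel_right, Matrix.smul_mul, Matrix.mul_smul, smul_smul,
    h_char]

lemma dftSlice_tTrans (A : Fin n3 → Matrix (Fin n1) (Fin n2) ℂ) (k : Fin n3) :
    dftSlice (tTrans A) k = (dftSlice A k)ᴴ := by
  simp only [dftSlice_eq_sum_stdAddCharFin, tTrans, Matrix.conjTranspose_sum,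
    Matrix.conjTranspose_smul]
  refine Fintype.sum_equiv (Equiv.neg _) _ _ fun t => ?_
  simp [← AddChar.map_neg_eq_conj]

lemma dftSlice_idTensor (k : Fin n3) : dftSlice (idTensor n1 n3) k = 1 := by
  rw [dftSlice_eq_sum_stdAddCharFin, Fintype.sum_eq_single 0 fun t ht => by simp [idTensor, ht]]
  simp [idTensor]

lemma tProd_eq_iff (A : Fin n3 → Matrix (Fin n1) (Fin n2) ℂ)
    (B : Fin n3 → Matrix (Fin n2) (Fin n4) ℂ) (C : Fin n3 → Matrix (Fin n1) (Fin n4) ℂ) :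
    tProd A B = C ↔ ∀ k, dftSlice A k * dftSlice B k = dftSlice C k := by
  rw [← dftSlice_injective.eq_iff, funext_iff]
  simp only [dftSlice_tProd]

end

/-- a tensor is orthogonal iff all its Fourier-domain frontal
slices are unitary matrices. -/
theorem orthogonal_iff_fourier_slices_unitary (n n3 : ℕ) [NeZero n3]
    (Q : Fin n3 → Matrix (Fin n) (Fin n) ℂ) :
    (tProd Q (tTrans Q) = idTensor n n3 ∧ tProd (tTrans Q) Q = idTensor n n3) ↔
      ∀ k : Fin n3,
        dftSlice Q k * (dftSlice Q k)ᴴ = 1 ∧ (dftSlice Q k)ᴴ * dftSlice Q k = 1 := by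
  simp only [tProd_eq_iff, dftSlice_tTrans, dftSlice_idTensor, forall_and]
end

section
/- Let A = U * S * V^T be a t-SVD. Then the tensor nuclear norm defined as tr(S) = Σ_{i=1}^{n3} tr(S^{(i)}) equals the matrix nuclear norm of the first Fourier-domain frontal slice: tr(S) = ‖Ā^{(1)}‖_*, provided S is obtained from the matrix SVDs of the Fourier slices Ā^{(k)} with nonnegative singular values. -/
open Finset Matrix

/-- Trace of a (possibly rectangular) matrix: sum of its diagonal entries. -/
noncomputable def rtrace {n1 n2 : ℕ} (M : Matrix (Fin n1) (Fin n2) ℂ) : ℂ :=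
  ∑ a : Fin (min n1 n2),
    M ⟨a, lt_of_lt_of_le a.2 (min_le_left _ _)⟩ ⟨a, lt_of_lt_of_le a.2 (min_le_right _ _)⟩

/-- Nuclear norm of a complex matrix: sum of its singular values, i.e. the sum
of the square roots of the eigenvalues of Mᴴ M. -/
noncomputable def nuclearNorm {n1 n2 : ℕ} (M : Matrix (Fin n1) (Fin n2) ℂ) : ℝ :=
  ∑ i : Fin n2, Real.sqrt ((Matrix.isHermitian_conjTranspose_mul_self M).eigenvalues i)

/-!
At frequency zero the DFT is the plain sum of the frontal slices, so `tr(S) = tr(S̄⁽¹⁾)`.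
Since `Ā⁽¹⁾ = Ū S̄⁽¹⁾ V̄ᴴ` with unitary factors, `(Ā⁽¹⁾)ᴴ Ā⁽¹⁾ = V̄ (S̄⁽¹⁾ᴴ S̄⁽¹⁾) V̄ᴴ` has the
characteristic polynomial of the diagonal matrix `diag |s_b|²`, where `s_b` are the diagonal
entries of `S̄⁽¹⁾`; hence the singular values of `Ā⁽¹⁾` are the `|s_b| = s_b`.
-/

open Polynomial in
lemma Matrix.IsHermitian.map_eigenvalues_eq_of_charpoly_eq_diagonal {𝕜 n : Type*} [RCLike 𝕜]
    [Fintype n] [DecidableEq n] {A : Matrix n n 𝕜} (hA : A.IsHermitian) {d : n → ℝ}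
    (h : A.charpoly = (diagonal fun i => (d i : 𝕜)).charpoly) :
    univ.val.map hA.eigenvalues = univ.val.map d := by
  have hroots := congrArg roots h
  rw [hA.roots_charpoly_eq_eigenvalues, charpoly_diagonal, roots_prod _ _ (by
    simp [Finset.prod_ne_zero_iff, X_sub_C_ne_zero])] at hroots
  simpa [Multiset.map_map] using congrArg (Multiset.map RCLike.re) hroots

lemma nuclearNorm_mul_mul_conjTranspose {n1 n2 : ℕ} {U : Matrix (Fin n1) (Fin n1) ℂ}
    {V : Matrix (Fin n2) (Fin n2) ℂ} (hU : Uᴴ * U = 1) (hV : Vᴴ * V = 1)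
    (D : Matrix (Fin n1) (Fin n2) ℂ) :
    nuclearNorm (U * D * Vᴴ) = nuclearNorm D := by
  have hcharpoly : ((U * D * Vᴴ)ᴴ * (U * D * Vᴴ)).charpoly = (Dᴴ * D).charpoly := by
    have : (U * D * Vᴴ)ᴴ * (U * D * Vᴴ) = V * (Dᴴ * D * Vᴴ) := by
      simp only [conjTranspose_mul, conjTranspose_conjTranspose, Matrix.mul_assoc]
      rw [← Matrix.mul_assoc Uᴴ, hU, Matrix.one_mul]
    rw [this, charpoly_mul_comm, Matrix.mul_assoc, hV, Matrix.mul_one]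
  unfold nuclearNorm
  rw [(IsHermitian.eigenvalues_eq_eigenvalues_iff _ _).mpr hcharpoly]

lemma rtrace_sum {ι : Type*} {n1 n2 : ℕ} (s : Finset ι) (M : ι → Matrix (Fin n1) (Fin n2) ℂ) :
    rtrace (∑ i ∈ s, M i) = ∑ i ∈ s, rtrace (M i) := by
  simp only [rtrace, Matrix.sum_apply]
  exact sum_comm

lemma dftSlice_zero {n1 n2 n3 : ℕ} [NeZero n3] (A : Fin n3 → Matrix (Fin n1) (Fin n2) ℂ) :
    dftSlice A 0 = ∑ t, A t := by
  simp [dftSlice]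

section RectDiagonal

open scoped ComplexOrder

variable {n1 n2 : ℕ}

/-- The diagonal of a rectangular matrix, read along its columns and padded with zeros. -/
def colDiag (M : Matrix (Fin n1) (Fin n2) ℂ) (b : Fin n2) : ℂ :=
  if h : (b : ℕ) < n1 then M ⟨b, h⟩ b else 0

lemma rtrace_eq_sum_colDiag (M : Matrix (Fin n1) (Fin n2) ℂ) :
    rtrace M = ∑ b, colDiag M b := by
  symm
  calc ∑ b, colDiag M b
      = ∑ b ∈ univ.map (Fin.castLEEmb (min_le_right n1 n2)), colDiag M b := by
        refine (sum_subset (subset_univ _) fun b _ hb => dif_neg fun hb1 => hb ?_).symm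
        simpa using ⟨⟨b, lt_min hb1 b.2⟩, rfl⟩
    _ = rtrace M := by
        rw [sum_map]
        exact sum_congr rfl fun a _ => dif_pos (lt_of_lt_of_le a.2 (min_le_left _ _))

lemma apply_eq_ite_colDiag {D : Matrix (Fin n1) (Fin n2) ℂ}
    (hD : ∀ (a : Fin n1) (b : Fin n2), (a : ℕ) ≠ b → D a b = 0) (a : Fin n1) (b : Fin n2) :
    D a b = if (a : ℕ) = b then colDiag D b else 0 := by
  split_ifs with hab
  · simp [colDiag, ← hab]
  · exact hD a b hab

lemma conjTranspose_mul_self_eq_diagonal_colDiag {D : Matrix (Fin n1) (Fin n2) ℂ}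
    (hD : ∀ (a : Fin n1) (b : Fin n2), (a : ℕ) ≠ b → D a b = 0) :
    Dᴴ * D = diagonal fun b => ((‖colDiag D b‖ ^ 2 : ℝ) : ℂ) := by
  ext b c
  rw [mul_apply, diagonal_apply]
  split_ifs with hbc
  · subst hbc
    by_cases hb : (b : ℕ) < n1
    · rw [sum_eq_single ⟨b, hb⟩]
      · simp [colDiag, hb, Complex.conj_mul']
      · intro a _ hab
        rw [hD a b fun h => hab (Fin.ext h), mul_zero]
      · simp
    · have hzero : colDiag D b = 0 := dif_neg hb
      refine (sum_eq_zero fun a _ => ?_).trans (by simp [hzero])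
      rw [hD a b fun h => hb (h ▸ a.2), mul_zero]
  · refine sum_eq_zero fun a _ => ?_
    rw [conjTranspose_apply, apply_eq_ite_colDiag hD a b, apply_eq_ite_colDiag hD a c]
    split_ifs <;> simp_all [Fin.ext_iff]

lemma nuclearNorm_eq_sum_norm_colDiag {D : Matrix (Fin n1) (Fin n2) ℂ}
    (hD : ∀ (a : Fin n1) (b : Fin n2), (a : ℕ) ≠ b → D a b = 0) :
    nuclearNorm D = ∑ b, ‖colDiag D b‖ := by
  have hmap := (isHermitian_conjTranspose_mul_self D).map_eigenvalues_eq_of_charpoly_eq_diagonal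
    (d := fun b => ‖colDiag D b‖ ^ 2)
    (congrArg charpoly (conjTranspose_mul_self_eq_diagonal_colDiag hD))
  calc nuclearNorm D = ((univ.val.map fun b => ‖colDiag D b‖ ^ 2).map Real.sqrt).sum := by
        rw [← hmap, Multiset.map_map]; rfl
    _ = ∑ b, ‖colDiag D b‖ := by
        simp only [Multiset.map_map, Function.comp_def, Real.sqrt_sq (norm_nonneg _)]; rfl

lemma nuclearNorm_eq_rtrace {D : Matrix (Fin n1) (Fin n2) ℂ}
    (hD : ∀ (a : Fin n1) (b : Fin n2), (a : ℕ) ≠ b → D a b = 0)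
    (hnonneg : ∀ a b, 0 ≤ D a b) :
    (nuclearNorm D : ℂ) = rtrace D := by
  have hcol (b : Fin n2) : 0 ≤ colDiag D b := by
    unfold colDiag; split_ifs
    exacts [hnonneg _ _, le_rfl]
  rw [nuclearNorm_eq_sum_norm_colDiag hD, rtrace_eq_sum_colDiag, Complex.ofReal_sum]
  exact sum_congr rfl fun b _ => Complex.norm_of_nonneg' (hcol b)

end RectDiagonal

theorem tensor_nuclear_norm_eq_nuclearNorm_first_fourier_slice_general
    (n1 n2 n3 : ℕ) [NeZero n3]
    (A : Fin n3 → Matrix (Fin n1) (Fin n2) ℂ)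
    (U : Fin n3 → Matrix (Fin n1) (Fin n1) ℂ)
    (S : Fin n3 → Matrix (Fin n1) (Fin n2) ℂ)
    (V : Fin n3 → Matrix (Fin n2) (Fin n2) ℂ)
    (hSVD : ∀ k : Fin n3,
      dftSlice A k = dftSlice U k * dftSlice S k * (dftSlice V k)ᴴ)
    (hUunit : ∀ k : Fin n3,
      dftSlice U k * (dftSlice U k)ᴴ = 1 ∧ (dftSlice U k)ᴴ * dftSlice U k = 1)
    (hVunit : ∀ k : Fin n3,
      dftSlice V k * (dftSlice V k)ᴴ = 1 ∧ (dftSlice V k)ᴴ * dftSlice V k = 1)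
    (hSdiag : ∀ (k : Fin n3) (a : Fin n1) (b : Fin n2),
      (a : ℕ) ≠ (b : ℕ) → dftSlice S k a b = 0)
    (hSnonneg : ∀ (k : Fin n3) (a : Fin n1) (b : Fin n2),
      ∃ σ : ℝ, 0 ≤ σ ∧ dftSlice S k a b = (σ : ℂ)) :
    ∑ i : Fin n3, rtrace (S i) = (nuclearNorm (dftSlice A 0) : ℂ) := by
  open scoped ComplexOrder in
  have hSnonneg' : ∀ a b, 0 ≤ dftSlice S 0 a b := fun a b => by
    obtain ⟨σ, hσ, hσS⟩ := hSnonneg 0 a b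
    exact hσS ▸ Complex.zero_le_real.mpr hσ
  calc ∑ i, rtrace (S i) = rtrace (dftSlice S 0) := by rw [dftSlice_zero, rtrace_sum]
    _ = nuclearNorm (dftSlice S 0) := (nuclearNorm_eq_rtrace (hSdiag 0) hSnonneg').symm
    _ = nuclearNorm (dftSlice A 0) := by
      rw [hSVD 0, nuclearNorm_mul_mul_conjTranspose (hUunit 0).2 (hVunit 0).2]

/-- for a t-SVD A = U * S * Vᵀ obtained from the matrix SVDs of
the Fourier slices (with unitary factors and nonnegative diagonal slices), the
tensor nuclear norm tr(S) = Σᵢ tr(S⁽ⁱ⁾) equals the matrix nuclear norm of the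
first Fourier-domain frontal slice of A. -/
theorem tensor_nuclear_norm_eq_nuclearNorm_first_fourier_slice
    (n1 n2 n3 : ℕ) [NeZero n3]
    (A : Fin n3 → Matrix (Fin n1) (Fin n2) ℂ)
    (U : Fin n3 → Matrix (Fin n1) (Fin n1) ℂ)
    (S : Fin n3 → Matrix (Fin n1) (Fin n2) ℂ)
    (V : Fin n3 → Matrix (Fin n2) (Fin n2) ℂ)
    (hA : A = tProd U (tProd S (tTrans V)))
    (hSVD : ∀ k : Fin n3,
      dftSlice A k = dftSlice U k * dftSlice S k * (dftSlice V k)ᴴ)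
    (hUunit : ∀ k : Fin n3,
      dftSlice U k * (dftSlice U k)ᴴ = 1 ∧ (dftSlice U k)ᴴ * dftSlice U k = 1)
    (hVunit : ∀ k : Fin n3,
      dftSlice V k * (dftSlice V k)ᴴ = 1 ∧ (dftSlice V k)ᴴ * dftSlice V k = 1)
    (hSdiag : ∀ (k : Fin n3) (a : Fin n1) (b : Fin n2),
      (a : ℕ) ≠ (b : ℕ) → dftSlice S k a b = 0)
    (hSnonneg : ∀ (k : Fin n3) (a : Fin n1) (b : Fin n2),
      ∃ σ : ℝ, 0 ≤ σ ∧ dftSlice S k a b = (σ : ℂ)) :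
    ∑ i : Fin n3, rtrace (S i) = (nuclearNorm (dftSlice A 0) : ℂ) :=
  tensor_nuclear_norm_eq_nuclearNorm_first_fourier_slice_general n1 n2 n3 A U S V hSVD hUunit hVunit
    hSdiag hSnonneg
end

section
/- For row-orthonormal matrices A ∈ ℝ^{r×m} (A A^T = I_r) and B ∈ ℝ^{r×n} (B B^T = I_r) and any X ∈ ℝ^{m×n}, tr(A X B^T) ≤ Σ_{j=1}^{r} σ_j(X), the sum of the r largest singular values of X. -/
open Matrix Finset

/-- Rectangular diagonal matrix with diagonal entries σ. -/
noncomputable def svdDiag (m n : ℕ) (σ : Fin (min m n) → ℝ) :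
    Matrix (Fin m) (Fin n) ℝ :=
  Matrix.of fun i j =>
    if h : (i : ℕ) = (j : ℕ) ∧ (i : ℕ) < min m n then σ ⟨i, h.2⟩ else 0

/-!
With `P = A U` and `Q = B V`, which are again row-orthonormal, `tr(A X Bᵀ) = tr(P Σ Qᵀ)` is
`∑ₗ σₗ ⟪pₗ, qₗ⟫` over the columns `pₗ`, `qₗ` of `P`, `Q`. By AM-GM `⟪pₗ, qₗ⟫ ≤ wₗ`, where
`wₗ = (‖pₗ‖² + ‖qₗ‖²) / 2`. Columns of a row-orthonormal matrix have norm at most `1` and their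
squared norms sum to `r`, so `0 ≤ wₗ ≤ 1` and `∑ wₗ ≤ r`; for decreasing nonnegative `σ` such a
weighted sum is largest when the weight sits on the first `r` terms.
-/

lemma mul_mul_transpose_eq_one {ι κ : Type*} [Fintype κ] [DecidableEq ι] [DecidableEq κ]
    {P : Matrix ι κ ℝ} {U : Matrix κ κ ℝ} (hP : P * Pᵀ = 1) (hU : U * Uᵀ = 1) :
    P * U * (P * U)ᵀ = 1 := by
  rw [transpose_mul, Matrix.mul_assoc, ← Matrix.mul_assoc U, hU, Matrix.one_mul, hP]

section RowOrthonormal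

variable {ι κ : Type*} [Fintype ι] [Fintype κ] [DecidableEq ι] {P : Matrix ι κ ℝ}

/-- `Pᵀ * P` is a symmetric idempotent, so its diagonal entry `‖P_k‖²` equals `∑ⱼ (PᵀP)ₖⱼ²`,
which is at least `‖P_k‖⁴`. -/
lemma sum_sq_col_le_one (hP : P * Pᵀ = 1) (k : κ) : ∑ i, P i k ^ 2 ≤ 1 := by
  set M := Pᵀ * P
  have hM_idem : M * M = M := by
    rw [Matrix.mul_assoc, ← Matrix.mul_assoc P, hP, Matrix.one_mul]
  have hM_symm (j : κ) : M j k = M k j := by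
    simp only [M, mul_apply, transpose_apply, mul_comm]
  have hM_diag : M k k = ∑ i, P i k ^ 2 := by simp [M, mul_apply, sq]
  have hM_sq : M k k = ∑ j, M k j ^ 2 := by
    conv_lhs => rw [← hM_idem]
    simp only [mul_apply, sq, hM_symm]
  have h_single : M k k ^ 2 ≤ ∑ j, M k j ^ 2 :=
    single_le_sum (f := fun j => M k j ^ 2) (fun j _ => sq_nonneg _) (mem_univ k)
  have h_nonneg : 0 ≤ M k k := hM_diag ▸ sum_nonneg fun i _ => sq_nonneg _
  nlinarith

lemma sum_sum_sq_eq_card (hP : P * Pᵀ = 1) : ∑ k, ∑ i, P i k ^ 2 = Fintype.card ι := by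
  have h_row (i : ι) : ∑ k, P i k ^ 2 = 1 := by
    simpa [mul_apply, sq] using congrFun (congrFun hP i) i
  simp [Finset.sum_comm (γ := κ), h_row]

lemma sum_sum_sq_comp_le_card {N : Type*} [Fintype N] (hP : P * Pᵀ = 1) {e : N → κ}
    (he : Function.Injective e) : ∑ l, ∑ i, P i (e l) ^ 2 ≤ Fintype.card ι := by
  calc ∑ l, ∑ i, P i (e l) ^ 2 = ∑ k ∈ univ.map ⟨e, he⟩, ∑ i, P i k ^ 2 :=
        (sum_map univ ⟨e, he⟩ fun k => ∑ i, P i k ^ 2).symm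
    _ ≤ ∑ k, ∑ i, P i k ^ 2 :=
        sum_le_univ_sum_of_nonneg fun k => sum_nonneg fun i _ => sq_nonneg _
    _ = Fintype.card ι := sum_sum_sq_eq_card hP

end RowOrthonormal

section SvdDiag

variable {m n : ℕ} {σ : Fin (min m n) → ℝ}

lemma svdDiag_apply_castLE (l : Fin (min m n)) :
    svdDiag m n σ (l.castLE (min_le_left m n)) (l.castLE (min_le_right m n)) = σ l :=
  dif_pos ⟨rfl, l.isLt⟩

lemma svdDiag_apply_of_ne (k : Fin m) (j : Fin n)
    (h : ∀ l : Fin (min m n),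
      (l.castLE (min_le_left m n), l.castLE (min_le_right m n)) ≠ (k, j)) :
    svdDiag m n σ k j = 0 :=
  dif_neg fun ⟨hkj, hk⟩ => h ⟨k, hk⟩ (Prod.ext rfl (Fin.ext hkj))

lemma sum_sum_svdDiag_mul (f : Fin m → Fin n → ℝ) :
    ∑ k, ∑ j, svdDiag m n σ k j * f k j =
      ∑ l, σ l * f (l.castLE (min_le_left m n)) (l.castLE (min_le_right m n)) := by
  rw [← Fintype.sum_prod_type']
  refine (Fintype.sum_of_injective
    (fun l => (l.castLE (min_le_left m n), l.castLE (min_le_right m n))) ?_ _ _ ?_ ?_).symm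
  · intro l l' h
    exact Fin.castLE_injective (min_le_left m n) (congrArg Prod.fst h)
  · rintro ⟨k, j⟩ hkj
    rw [svdDiag_apply_of_ne k j fun l hl => hkj ⟨l, hl⟩, zero_mul]
  · intro l
    rw [svdDiag_apply_castLE]

lemma trace_mul_svdDiag_mul_transpose {ι : Type*} [Fintype ι] (P : Matrix ι (Fin m) ℝ)
    (Q : Matrix ι (Fin n) ℝ) :
    (P * svdDiag m n σ * Qᵀ).trace =
      ∑ l, σ l * ∑ i, P i (l.castLE (min_le_left m n)) * Q i (l.castLE (min_le_right m n)) := by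
  rw [Matrix.mul_assoc, trace_mul_comm, Matrix.mul_assoc]
  simp only [trace, diag_apply, mul_apply (M := svdDiag m n σ)]
  rw [sum_sum_svdDiag_mul fun k j => (Qᵀ * P) j k]
  simp only [mul_apply, transpose_apply, mul_comm (Q _ _)]

end SvdDiag

/-- Compare termwise with the threshold `τ = σ r`:
`σ l * a l ≤ [l < r] σ l + τ (a l - [l < r])`, and the `τ`-terms sum to `τ (∑ a - r) ≤ 0`. -/
lemma Antitone.sum_mul_le_sum_filter_lt {N r : ℕ} {σ a : Fin N → ℝ} (hσ : Antitone σ)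
    (hσ0 : ∀ l, 0 ≤ σ l) (ha0 : ∀ l, 0 ≤ a l) (ha1 : ∀ l, a l ≤ 1) (ha : ∑ l, a l ≤ r) :
    ∑ l, σ l * a l ≤ ∑ l ∈ univ.filter (fun l : Fin N => (l : ℕ) < r), σ l := by
  rcases lt_or_ge r N with hr | hr
  · set τ := σ ⟨r, hr⟩
    have h_term (l : Fin N) : σ l * a l ≤
        (if (l : ℕ) < r then σ l else 0) + τ * (a l - if (l : ℕ) < r then 1 else 0) := by
      split_ifs with hl
      · have : τ ≤ σ l := hσ (Fin.le_def.2 hl.le)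
        nlinarith [ha1 l]
      · have : σ l ≤ τ := hσ (Fin.le_def.2 (not_lt.1 hl))
        nlinarith [ha0 l]
    have h_card : ∑ l : Fin N, (if (l : ℕ) < r then (1 : ℝ) else 0) = r := by
      rw [sum_boole, Fin.card_filter_val_lt, min_eq_right hr.le]
    calc ∑ l, σ l * a l
        ≤ ∑ l : Fin N,
            ((if (l : ℕ) < r then σ l else 0) + τ * (a l - if (l : ℕ) < r then 1 else 0)) :=
          sum_le_sum fun l _ => h_term l
      _ = ∑ l ∈ univ.filter (fun l : Fin N => (l : ℕ) < r), σ l + τ * (∑ l, a l - r) := by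
          rw [sum_add_distrib, ← mul_sum, sum_sub_distrib, h_card, sum_filter]
      _ ≤ ∑ l ∈ univ.filter (fun l : Fin N => (l : ℕ) < r), σ l := by
          nlinarith [hσ0 ⟨r, hr⟩]
  · rw [filter_true_of_mem fun l _ => l.isLt.trans_le hr]
    exact sum_le_sum fun l _ => mul_le_of_le_one_right (hσ0 l) (ha1 l)

theorem trace_mul_svdDiag_mul_transpose_le {m n r : ℕ} {σ : Fin (min m n) → ℝ}
    (hσ : Antitone σ) (hσ0 : ∀ j, 0 ≤ σ j) {P : Matrix (Fin r) (Fin m) ℝ}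
    {Q : Matrix (Fin r) (Fin n) ℝ} (hP : P * Pᵀ = 1) (hQ : Q * Qᵀ = 1) :
    (P * svdDiag m n σ * Qᵀ).trace ≤
      ∑ j ∈ univ.filter (fun j : Fin (min m n) => (j : ℕ) < r), σ j := by
  set em := Fin.castLE (min_le_left m n)
  set en := Fin.castLE (min_le_right m n)
  set p : Fin (min m n) → ℝ := fun l => ∑ i, P i (em l) ^ 2
  set q : Fin (min m n) → ℝ := fun l => ∑ i, Q i (en l) ^ 2
  have hp0 (l) : 0 ≤ p l := sum_nonneg fun i _ => sq_nonneg _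
  have hq0 (l) : 0 ≤ q l := sum_nonneg fun i _ => sq_nonneg _
  have hp1 (l) : p l ≤ 1 := sum_sq_col_le_one hP (em l)
  have hq1 (l) : q l ≤ 1 := sum_sq_col_le_one hQ (en l)
  have hp_sum : ∑ l, p l ≤ r := by
    simpa using sum_sum_sq_comp_le_card hP (Fin.castLE_injective (min_le_left m n))
  have hq_sum : ∑ l, q l ≤ r := by
    simpa using sum_sum_sq_comp_le_card hQ (Fin.castLE_injective (min_le_right m n))
  have h_amgm (l) : ∑ i, P i (em l) * Q i (en l) ≤ (p l + q l) / 2 := by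
    rw [← sum_add_distrib, sum_div]
    exact sum_le_sum fun i _ => by nlinarith [two_mul_le_add_sq (P i (em l)) (Q i (en l))]
  rw [trace_mul_svdDiag_mul_transpose]
  calc _ ≤ ∑ l, σ l * ((p l + q l) / 2) :=
        sum_le_sum fun l _ => mul_le_mul_of_nonneg_left (h_amgm l) (hσ0 l)
    _ ≤ _ := by
        refine hσ.sum_mul_le_sum_filter_lt hσ0 (fun l => ?_) (fun l => ?_) ?_
        · linarith [hp0 l, hq0 l]
        · linarith [hp1 l, hq1 l]
        · rw [← sum_div, sum_add_distrib]
          linarith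

theorem trace_AXBt_le_sum_largest_singular_values_general (m n r : ℕ)
    (X : Matrix (Fin m) (Fin n) ℝ)
    (U : Matrix (Fin m) (Fin m) ℝ) (V : Matrix (Fin n) (Fin n) ℝ)
    (σ : Fin (min m n) → ℝ) (hσ : Antitone σ) (hσ0 : ∀ j, 0 ≤ σ j)
    (hU : U * Uᵀ = 1)
    (hV : V * Vᵀ = 1)
    (hX : X = U * svdDiag m n σ * Vᵀ)
    (A : Matrix (Fin r) (Fin m) ℝ) (B : Matrix (Fin r) (Fin n) ℝ)
    (hA : A * Aᵀ = 1) (hB : B * Bᵀ = 1) :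
    (A * X * Bᵀ).trace ≤
      ∑ j ∈ univ.filter (fun j : Fin (min m n) => (j : ℕ) < r), σ j := by
  have h_conj : A * X * Bᵀ = A * U * svdDiag m n σ * (B * V)ᵀ := by
    rw [hX, transpose_mul]
    simp only [Matrix.mul_assoc]
  rw [h_conj]
  exact trace_mul_svdDiag_mul_transpose_le hσ hσ0 (mul_mul_transpose_eq_one hA hU)
    (mul_mul_transpose_eq_one hB hV)

/-- for row-orthonormal A and B, tr(A X Bᵀ) is at most the sum of
the r largest singular values of X. -/
theorem trace_AXBt_le_sum_largest_singular_values (m n r : ℕ)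
    (X : Matrix (Fin m) (Fin n) ℝ)
    (U : Matrix (Fin m) (Fin m) ℝ) (V : Matrix (Fin n) (Fin n) ℝ)
    (σ : Fin (min m n) → ℝ) (hσ : Antitone σ) (hσ0 : ∀ j, 0 ≤ σ j)
    (hU : U * Uᵀ = 1) (hU' : Uᵀ * U = 1)
    (hV : V * Vᵀ = 1) (hV' : Vᵀ * V = 1)
    (hX : X = U * svdDiag m n σ * Vᵀ)
    (A : Matrix (Fin r) (Fin m) ℝ) (B : Matrix (Fin r) (Fin n) ℝ)
    (hA : A * Aᵀ = 1) (hB : B * Bᵀ = 1) :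
    (A * X * Bᵀ).trace ≤
      ∑ j ∈ univ.filter (fun j : Fin (min m n) => (j : ℕ) < r), σ j :=
  trace_AXBt_le_sum_largest_singular_values_general m n r X U V σ hσ hσ0 hU hV hX A B hA hB
end
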